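/- arXiv:1204.3536 — 5 statements merged into one kernel-verified Lean document; each statement's English description precedes it below -/
import Mathlib

section
/- Let K ≥ 1 and let ρ_1,…,ρ_K > 0 with ∑_{l=1}^K ρ_l = 1, and let Θ_1,…,Θ_K > 0. Set θ = ∑_{l=1}^K ρ_l Θ_l. Then ∑_{l=1}^K ρ_l/Θ_l ≤ θ · ∑_{l=1}^K ρ_l/Θ_l², equivalently (∑_{l=1}^K ρ_l/Θ_l) / (∑_{l=1}^K (3/2)·ρ_l/Θ_l²) ≤ (2/3)·θ. Consequently the leading-order critical noise level of the heterogeneous model, σ_c^{div} = sqrt((∑ ρ_l/Θ_l)/(∑ 3ρ_l/(2Θ_l²))), is at most that of the homogeneous model, σ_c^{homo} = sqrt(2θ/3). -/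
/-! Cauchy–Schwarz for the weights `w` gives `(∑ w/x)² ≤ (∑ w)(∑ w/x²)` and
`(∑ w)² ≤ (∑ w x)(∑ w/x)`. Multiplying them and cancelling `(∑ w)(∑ w/x)` gives
`(∑ w)(∑ w/x) ≤ (∑ w x)(∑ w/x²)`, which for probability weights is the first claim; the other two
are rescalings of it. -/

open Finset

namespace Finset

variable {ι : Type*} (s : Finset ι) {w x : ι → ℝ}

theorem sq_sum_div_le_sum_mul_sum_div_sq (hw : ∀ i ∈ s, 0 ≤ w i) :
    (∑ i ∈ s, w i / x i) ^ 2 ≤ (∑ i ∈ s, w i) * ∑ i ∈ s, w i / x i ^ 2 :=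
  sum_sq_le_sum_mul_sum_of_sq_le_mul s hw (fun i hi => div_nonneg (hw i hi) (sq_nonneg _))
    (fun i hi => by rw [div_pow, sq, mul_div_assoc])

theorem sq_sum_le_sum_mul_mul_sum_div (hw : ∀ i ∈ s, 0 ≤ w i) (hx : ∀ i ∈ s, 0 < x i) :
    (∑ i ∈ s, w i) ^ 2 ≤ (∑ i ∈ s, w i * x i) * ∑ i ∈ s, w i / x i :=
  sum_sq_le_sum_mul_sum_of_sq_le_mul s
    (fun i hi => mul_nonneg (hw i hi) (hx i hi).le)
    (fun i hi => div_nonneg (hw i hi) (hx i hi).le)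
    (fun i hi => le_of_eq (by field_simp [(hx i hi).ne']))

theorem sum_mul_sum_div_le_sum_mul_mul_sum_div_sq (hw : ∀ i ∈ s, 0 ≤ w i)
    (hx : ∀ i ∈ s, 0 < x i) :
    (∑ i ∈ s, w i) * (∑ i ∈ s, w i / x i) ≤
      (∑ i ∈ s, w i * x i) * ∑ i ∈ s, w i / x i ^ 2 := by
  set A := ∑ i ∈ s, w i
  set B := ∑ i ∈ s, w i / x i
  set C := ∑ i ∈ s, w i * x i
  set D := ∑ i ∈ s, w i / x i ^ 2
  have hA : 0 ≤ A := sum_nonneg hw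
  have hB : 0 ≤ B := sum_nonneg fun i hi => div_nonneg (hw i hi) (hx i hi).le
  have hC : 0 ≤ C := sum_nonneg fun i hi => mul_nonneg (hw i hi) (hx i hi).le
  have hD : 0 ≤ D := sum_nonneg fun i hi => div_nonneg (hw i hi) (sq_nonneg _)
  have hsq : (A * B) ^ 2 ≤ (A * B) * (C * D) :=
    calc (A * B) ^ 2 = A ^ 2 * B ^ 2 := mul_pow A B 2
      _ ≤ (C * B) * (A * D) := mul_le_mul (sq_sum_le_sum_mul_mul_sum_div s hw hx)
          (sq_sum_div_le_sum_mul_sum_div_sq s hw) (sq_nonneg B) (by positivity)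
      _ = (A * B) * (C * D) := by ring
  nlinarith [mul_nonneg hA hB, mul_nonneg hC hD]

end Finset

theorem stmt_2_general (K : ℕ) (ρ Θ : Fin K → ℝ)
    (hρ : ∀ l, 0 < ρ l) (hsum : ∑ l, ρ l = 1) (hΘ : ∀ l, 0 < Θ l)
    (θ : ℝ) (hθ : θ = ∑ l, ρ l * Θ l) :
    (∑ l, ρ l / Θ l) ≤ θ * ∑ l, ρ l / (Θ l) ^ 2 ∧
    (∑ l, ρ l / Θ l) / (∑ l, (3 / 2) * ρ l / (Θ l) ^ 2) ≤ (2 / 3) * θ ∧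
    Real.sqrt ((∑ l, ρ l / Θ l) / (∑ l, 3 * ρ l / (2 * (Θ l) ^ 2)))
      ≤ Real.sqrt (2 * θ / 3) := by
  have hw : ∀ l ∈ univ, 0 ≤ ρ l := fun l _ => (hρ l).le
  have hx : ∀ l ∈ univ, 0 < Θ l := fun l _ => hΘ l
  have key : ∑ l, ρ l / Θ l ≤ θ * ∑ l, ρ l / Θ l ^ 2 := by
    simpa [hsum, hθ] using sum_mul_sum_div_le_sum_mul_mul_sum_div_sq univ hw hx
  have hθ_nonneg : 0 ≤ θ := hθ ▸ sum_nonneg fun l hl => mul_nonneg (hw l hl) (hx l hl).le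
  have hS₂_nonneg : 0 ≤ ∑ l, ρ l / Θ l ^ 2 :=
    sum_nonneg fun l hl => div_nonneg (hw l hl) (sq_nonneg _)
  have hden : ∑ l, (3 / 2) * ρ l / Θ l ^ 2 = 3 / 2 * ∑ l, ρ l / Θ l ^ 2 := by
    rw [mul_sum]; exact sum_congr rfl fun l _ => mul_div_assoc _ _ _
  have hden' : ∑ l, 3 * ρ l / (2 * Θ l ^ 2) = 3 / 2 * ∑ l, ρ l / Θ l ^ 2 := by
    rw [mul_sum]; exact sum_congr rfl fun l _ => by ring
  have ratio : (∑ l, ρ l / Θ l) / (3 / 2 * ∑ l, ρ l / Θ l ^ 2) ≤ 2 / 3 * θ :=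
    div_le_of_le_mul₀ (by positivity) (by positivity) (by linarith)
  refine ⟨key, hden ▸ ratio, ?_⟩
  rw [hden', show 2 * θ / 3 = 2 / 3 * θ by ring]
  exact Real.sqrt_le_sqrt ratio

/-- With `θ = ∑ ρ_l Θ_l`: `∑ ρ_l/Θ_l ≤ θ·∑ ρ_l/Θ_l²`, equivalently
`(∑ ρ_l/Θ_l)/(∑ (3/2)ρ_l/Θ_l²) ≤ (2/3)θ`, and consequently
`σ_c^{div} = sqrt((∑ ρ_l/Θ_l)/(∑ 3ρ_l/(2Θ_l²))) ≤ σ_c^{homo} = sqrt(2θ/3)`. -/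
theorem stmt_2 (K : ℕ) (hK : 1 ≤ K) (ρ Θ : Fin K → ℝ)
    (hρ : ∀ l, 0 < ρ l) (hsum : ∑ l, ρ l = 1) (hΘ : ∀ l, 0 < Θ l)
    (θ : ℝ) (hθ : θ = ∑ l, ρ l * Θ l) :
    (∑ l, ρ l / Θ l) ≤ θ * ∑ l, ρ l / (Θ l) ^ 2 ∧
    (∑ l, ρ l / Θ l) / (∑ l, (3 / 2) * ρ l / (Θ l) ^ 2) ≤ (2 / 3) * θ ∧
    Real.sqrt ((∑ l, ρ l / Θ l) / (∑ l, 3 * ρ l / (2 * (Θ l) ^ 2)))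
      ≤ Real.sqrt (2 * θ / 3) :=
  stmt_2_general K ρ Θ hρ hsum hΘ θ hθ
end

section
/- Fix σ > 0, v > 0, ξ ∈ ℝ, and set η = 2/σ², V(y) = y⁴/4 − y²/2. For h > 0 define Z(h) = ∫_ℝ exp(−(y−ξ)²/(2v) − hηV(y)) dy and m(h) = Z(h)^{−1} ∫_ℝ y·exp(−(y−ξ)²/(2v) − hηV(y)) dy. Then, as h → 0⁺, m(h) = ξ − h·η·v·(ξ³ + 3vξ − ξ) + O(h²). -/
open Real MeasureTheory Filter Asymptotics Topology ProbabilityTheory Polynomial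
open scoped NNReal

/-!
Since `V` is bounded below, `exp (-t V) = 1 - t V + O(t² V²)` uniformly, so numerator and
denominator of the tilted mean `∫ f e^{-tV} dμ / ∫ e^{-tV} dμ` are affine in `t` up to `O(t²)`;
for a probability measure `μ` the tilted mean is therefore `∫ f dμ - t Cov(f, V) + O(t²)`. Normalizing the Gaussian weight makes `m(h)` such a tilted mean for
`Y ~ N(ξ, v)`, `f = id` and potential `ηV`. Gaussian integration by parts (Stein's identity
`E[(Y - ξ) g(Y)] = v E[g'(Y)]`) gives `Cov(Y, V(Y)) = v E[V'(Y)] = v (E[Y³] - E[Y])`, and the same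
identity yields the moment recursion behind `E[Y³] = ξ³ + 3vξ`.
-/

lemma abs_exp_neg_sub_one_add_le {a x : ℝ} (ha : 0 ≤ a) (hx : -a ≤ x) :
    |exp (-x) - 1 + x| ≤ x ^ 2 * exp a := by
  rw [abs_of_nonneg (by linarith [add_one_le_exp (-x)])]
  have h1a : 1 ≤ exp a := one_le_exp ha
  rcases le_or_gt |x| 1 with hx1 | hx1
  · have h := abs_le.mp (abs_exp_sub_one_sub_id_le (x := -x) (by rwa [abs_neg]))
    nlinarith [sq_nonneg x]
  · have hx2 : |x| ≤ x ^ 2 := by nlinarith [sq_abs x, abs_nonneg x]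
    rcases le_or_gt 0 x with hx0 | hx0
    · have : exp (-x) ≤ 1 := exp_le_one_iff.mpr (by linarith)
      nlinarith [abs_of_nonneg hx0, sq_nonneg x]
    · have : exp (-x) ≤ exp a := exp_le_exp.mpr (by linarith)
      have : 1 ≤ x ^ 2 := by nlinarith [abs_of_neg hx0]
      nlinarith [exp_pos a]

section TiltedMean

variable {α : Type*} [MeasurableSpace α] {μ : Measure α} {f V : α → ℝ}

lemma integrable_mul_exp_neg_mul {a t : ℝ} (hf : Integrable f μ) (hV : AEStronglyMeasurable V μ)
    (hVa : ∀ x, -a ≤ V x) (ht : 0 ≤ t) : Integrable (fun x => f x * exp (-(t * V x))) μ := by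
  simp_rw [mul_comm (f _)]
  refine hf.bdd_mul (c := exp (t * a)) (by fun_prop) (ae_of_all _ fun x => ?_)
  rw [norm_of_nonneg (exp_pos _).le, exp_le_exp]
  nlinarith [hVa x]

lemma abs_integral_mul_exp_neg_mul_sub_le {a t : ℝ} (ha : 0 ≤ a) (hf : Integrable f μ)
    (hV : AEStronglyMeasurable V μ) (hVa : ∀ x, -a ≤ V x)
    (hfV : Integrable (fun x => f x * V x) μ) (hfV2 : Integrable (fun x => f x * V x ^ 2) μ)
    (ht0 : 0 ≤ t) (ht1 : t ≤ 1) :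
    |∫ x, f x * exp (-(t * V x)) ∂μ - (∫ x, f x ∂μ - t * ∫ x, f x * V x ∂μ)|
      ≤ t ^ 2 * (exp a * ∫ x, |f x * V x ^ 2| ∂μ) := by
  have htV : ∀ x, -a ≤ t * V x := fun x => by nlinarith [hVa x]
  have hint := integrable_mul_exp_neg_mul hf hV hVa ht0
  have hlin : Integrable (fun x => f x - t * (f x * V x)) μ := hf.sub (hfV.const_mul t)
  rw [← integral_const_mul, ← integral_sub hf (hfV.const_mul t), ← integral_sub hint hlin,
    ← integral_const_mul, ← integral_const_mul]
  refine (abs_integral_le_integral_abs).trans (integral_mono_of_nonneg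
    (ae_of_all _ fun x => abs_nonneg _) ((hfV2.abs.const_mul _).const_mul _)
    (ae_of_all _ fun x => ?_))
  calc |f x * exp (-(t * V x)) - (f x - t * (f x * V x))|
      = |f x| * |exp (-(t * V x)) - 1 + t * V x| := by rw [← abs_mul]; ring_nf
    _ ≤ |f x| * ((t * V x) ^ 2 * exp a) := by gcongr; exact abs_exp_neg_sub_one_add_le ha (htV x)
    _ = t ^ 2 * (exp a * |f x * V x ^ 2|) := by
      rw [abs_mul, abs_of_nonneg (sq_nonneg (V x))]; ring

lemma isBigO_integral_mul_exp_neg_mul_sub (hf : Integrable f μ) (hV : AEStronglyMeasurable V μ)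
    (hVb : BddBelow (Set.range V)) (hfV : Integrable (fun x => f x * V x) μ)
    (hfV2 : Integrable (fun x => f x * V x ^ 2) μ) :
    (fun t => ∫ x, f x * exp (-(t * V x)) ∂μ - (∫ x, f x ∂μ - t * ∫ x, f x * V x ∂μ))
      =O[𝓝[>] 0] (fun t => t ^ 2) := by
  obtain ⟨b, hb⟩ := hVb
  have hVa : ∀ x, -max (-b) 0 ≤ V x := fun x => by
    have := hb ⟨x, rfl⟩
    linarith [le_max_left (-b) 0]
  refine .of_bound (exp (max (-b) 0) * ∫ x, |f x * V x ^ 2| ∂μ) ?_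
  filter_upwards [Ioo_mem_nhdsGT one_pos] with t ⟨ht0, ht1⟩
  rw [norm_eq_abs, norm_of_nonneg (sq_nonneg t), mul_comm _ (t ^ 2)]
  exact abs_integral_mul_exp_neg_mul_sub_le (le_max_right _ _) hf hV hVa hfV hfV2 ht0.le ht1.le

theorem isBigO_integral_mul_exp_neg_mul_div_sub [IsProbabilityMeasure μ] (hf : Integrable f μ)
    (hV : Integrable V μ) (hVb : BddBelow (Set.range V))
    (hV2 : Integrable (fun x => V x ^ 2) μ) (hfV : Integrable (fun x => f x * V x) μ)
    (hfV2 : Integrable (fun x => f x * V x ^ 2) μ) :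
    (fun t => (∫ x, f x * exp (-(t * V x)) ∂μ) / (∫ x, exp (-(t * V x)) ∂μ)
        - (∫ x, f x ∂μ - t * ∫ x, (f x - ∫ y, f y ∂μ) * V x ∂μ))
      =O[𝓝[>] 0] (fun t => t ^ 2) := by
  set Z := fun t => ∫ x, exp (-(t * V x)) ∂μ
  set m := ∫ x, f x ∂μ
  have hcov : ∫ x, (f x - m) * V x ∂μ = ∫ x, f x * V x ∂μ - m * ∫ x, V x ∂μ := by
    simp only [sub_mul]
    rw [integral_sub hfV (hV.const_mul m), integral_const_mul]
  have hZ : (fun t => Z t - (1 - t * ∫ x, V x ∂μ)) =O[𝓝[>] 0] (fun t => t ^ 2) := by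
    simpa using isBigO_integral_mul_exp_neg_mul_sub (integrable_const (1 : ℝ)) hV.1 hVb
      (by simpa using hV) (by simpa using hV2)
  have hN := isBigO_integral_mul_exp_neg_mul_sub hf hV.1 hVb hfV hfV2
  have hZ1 : Tendsto Z (𝓝[>] 0) (𝓝 1) := by
    have hlin : Tendsto (fun t : ℝ => 1 - t * ∫ x, V x ∂μ) (𝓝[>] 0) (𝓝 1) :=
      ((by fun_prop : Continuous fun t : ℝ => 1 - t * ∫ x, V x ∂μ).tendsto' 0 1
        (by simp)).mono_left nhdsWithin_le_nhds
    have hsq : Tendsto (fun t : ℝ => t ^ 2) (𝓝[>] 0) (𝓝 0) :=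
      ((continuous_pow 2).tendsto' 0 0 (by simp)).mono_left nhdsWithin_le_nhds
    simpa using (hZ.trans_tendsto hsq).add hlin
  have hmean : (fun t => m - t * ∫ x, (f x - m) * V x ∂μ) =O[𝓝[>] 0] (fun _ => (1 : ℝ)) :=
    (((by fun_prop : Continuous fun t : ℝ => m - t * ∫ x, (f x - m) * V x ∂μ).tendsto' 0 m
      (by simp)).mono_left nhdsWithin_le_nhds).isBigO_one ℝ
  -- with `N t = ∫ f e^{-tV}`, `A = ∫ V` and `c` the covariance term,
  -- `(N/Z - m(t)) Z = (N - (m - t ∫ f V)) - m(t) (Z - (1 - t A)) - t² A c`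
  have hnum := (hN.sub (by simpa using hmean.mul hZ)).sub
    ((isBigO_refl (fun t : ℝ => t ^ 2) _).const_mul_left
      ((∫ x, V x ∂μ) * ∫ x, (f x - m) * V x ∂μ))
  refine (hnum.mul ((hZ1.inv₀ one_ne_zero).isBigO_one ℝ)).congr' ?_ (by simp)
  filter_upwards [hZ1.eventually_ne one_ne_zero] with t hZt
  dsimp only [Z, m] at hZt hcov ⊢
  rw [hcov]
  field_simp
  ring

end TiltedMean

section Gaussian

variable {ξ : ℝ} {v : ℝ≥0}

lemma hasDerivAt_gaussianPDFReal (x : ℝ) :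
    HasDerivAt (gaussianPDFReal ξ v) (-((x - ξ) / v) * gaussianPDFReal ξ v x) x := by
  have h := ((((hasDerivAt_id x).sub_const ξ).fun_pow 2).neg.div_const
    (2 * (v : ℝ))).exp.const_mul (√(2 * π * v))⁻¹
  refine h.congr_deriv ?_
  simp only [gaussianPDFReal, Pi.neg_apply, id]
  ring

lemma integrable_gaussianReal_iff (hv : v ≠ 0) {f : ℝ → ℝ} :
    Integrable f (gaussianReal ξ v) ↔ Integrable (fun x => gaussianPDFReal ξ v x * f x) := by
  rw [gaussianReal_of_var_ne_zero _ hv, integrable_withDensity_iff_integrable_smul'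
    (measurable_gaussianPDF _ _) (ae_of_all _ fun _ => gaussianPDF_lt_top)]
  simp

lemma integrable_pow_gaussianReal (n : ℕ) : Integrable (fun x => x ^ n) (gaussianReal ξ v) := by
  refine (integrable_norm_iff (by fun_prop)).1 ?_
  simpa [norm_pow] using
    (memLp_id_gaussianReal' (μ := ξ) (v := v) n (by simp)).integrable_norm_pow'

lemma integrable_eval_gaussianReal (p : ℝ[X]) :
    Integrable (fun x => p.eval x) (gaussianReal ξ v) := by
  induction p using Polynomial.induction_on' with
  | add p q hp hq => simpa only [eval_add] using hp.fun_add hq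
  | monomial n a => simpa using (integrable_pow_gaussianReal n).const_mul a

theorem integral_sub_mul_gaussianReal (hv : v ≠ 0) {f f' : ℝ → ℝ}
    (hf : ∀ x, HasDerivAt f (f' x) x) (hfi : Integrable f (gaussianReal ξ v))
    (hf'i : Integrable f' (gaussianReal ξ v))
    (hxfi : Integrable (fun x => (x - ξ) * f x) (gaussianReal ξ v)) :
    ∫ x, (x - ξ) * f x ∂gaussianReal ξ v = v * ∫ x, f' x ∂gaussianReal ξ v := by
  rw [integrable_gaussianReal_iff hv] at hfi hf'i hxfi
  simp only [integral_gaussianReal_eq_integral_smul hv, smul_eq_mul]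
  have hderiv : ∀ x, HasDerivAt (fun x => gaussianPDFReal ξ v x * f x)
      (gaussianPDFReal ξ v x * f' x - gaussianPDFReal ξ v x * ((x - ξ) * f x) / v) x :=
    fun x => ((hasDerivAt_gaussianPDFReal x).mul (hf x)).congr_deriv (by ring)
  have h := integral_eq_zero_of_hasDerivAt_of_integrable hderiv (hf'i.sub (hxfi.div_const _)) hfi
  rw [integral_sub hf'i (hxfi.div_const _), integral_div, sub_eq_zero] at h
  rw [h]
  field_simp [show (v : ℝ) ≠ 0 by exact_mod_cast hv]

lemma integral_sub_mul_eval_gaussianReal (hv : v ≠ 0) (p : ℝ[X]) :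
    ∫ x, (x - ξ) * p.eval x ∂gaussianReal ξ v
      = v * ∫ x, p.derivative.eval x ∂gaussianReal ξ v := by
  have hxp : Integrable (fun x => (x - ξ) * p.eval x) (gaussianReal ξ v) := by
    have := integrable_eval_gaussianReal (ξ := ξ) (v := v) ((X - C ξ) * p)
    simp only [eval_mul, eval_sub, eval_X, eval_C] at this
    exact this
  exact integral_sub_mul_gaussianReal hv p.hasDerivAt (integrable_eval_gaussianReal p)
    (integrable_eval_gaussianReal _) hxp

lemma integral_pow_add_two_gaussianReal (hv : v ≠ 0) (k : ℕ) :
    ∫ x, x ^ (k + 2) ∂gaussianReal ξ v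
      = ξ * ∫ x, x ^ (k + 1) ∂gaussianReal ξ v
        + (k + 1) * v * ∫ x, x ^ k ∂gaussianReal ξ v := by
  have h := integral_sub_mul_eval_gaussianReal (ξ := ξ) hv (X ^ (k + 1))
  simp only [eval_pow, eval_X, derivative_X_pow, eval_mul, eval_C, integral_const_mul] at h
  have hsplit : ∫ x, (x - ξ) * x ^ (k + 1) ∂gaussianReal ξ v
      = ∫ x, x ^ (k + 2) ∂gaussianReal ξ v - ξ * ∫ x, x ^ (k + 1) ∂gaussianReal ξ v := by
    rw [← integral_const_mul, ← integral_sub (integrable_pow_gaussianReal _)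
      ((integrable_pow_gaussianReal _).const_mul ξ)]
    congr 1 with x
    ring
  push_cast at h
  linear_combination h - hsplit

lemma integral_pow_three_gaussianReal (hv : v ≠ 0) :
    ∫ x, x ^ 3 ∂gaussianReal ξ v = ξ ^ 3 + 3 * v * ξ := by
  have h0 : ∫ x, x ^ 0 ∂gaussianReal ξ v = 1 := by simp
  have h1 : ∫ x, x ^ 1 ∂gaussianReal ξ v = ξ := by simp
  have h2 := integral_pow_add_two_gaussianReal (ξ := ξ) hv 0
  have h3 := integral_pow_add_two_gaussianReal (ξ := ξ) hv 1
  rw [h0, h1] at h2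
  rw [h1, h2] at h3
  push_cast at h3
  linear_combination h3

theorem isBigO_integral_mul_exp_neg_eval_div_sub_gaussianReal (hv : v ≠ 0) (P : ℝ[X])
    (hP : BddBelow (Set.range fun x => P.eval x)) :
    (fun t => (∫ x, x * exp (-(t * P.eval x)) ∂gaussianReal ξ v)
          / (∫ x, exp (-(t * P.eval x)) ∂gaussianReal ξ v)
        - (ξ - t * (v * ∫ x, P.derivative.eval x ∂gaussianReal ξ v)))
      =O[𝓝[>] 0] (fun t => t ^ 2) := by
  have key := isBigO_integral_mul_exp_neg_mul_div_sub (μ := gaussianReal ξ v) (f := fun x => x)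
    (V := fun x => P.eval x)
    ((integrable_pow_gaussianReal 1).congr (ae_of_all _ fun x => pow_one x))
    (integrable_eval_gaussianReal P) hP
    ((integrable_eval_gaussianReal (P ^ 2)).congr (ae_of_all _ fun x => eval_pow _))
    ((integrable_eval_gaussianReal (X * P)).congr (ae_of_all _ fun x => by simp))
    ((integrable_eval_gaussianReal (X * P ^ 2)).congr (ae_of_all _ fun x => by simp))
  rwa [integral_id_gaussianReal, integral_sub_mul_eval_gaussianReal hv] at key

end Gaussian

noncomputable def doubleWell : ℝ[X] := C (1 / 4) * X ^ 4 - C (1 / 2) * X ^ 2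

lemma eval_doubleWell (y : ℝ) : doubleWell.eval y = y ^ 4 / 4 - y ^ 2 / 2 := by
  simp only [doubleWell, eval_sub, eval_mul, eval_C, eval_pow, eval_X]
  ring

lemma neg_quarter_le_eval_doubleWell (y : ℝ) : -(1 / 4) ≤ doubleWell.eval y := by
  rw [eval_doubleWell]
  nlinarith [sq_nonneg (y ^ 2 - 1)]

lemma integral_eval_derivative_doubleWell_gaussianReal {ξ : ℝ} {v : ℝ≥0} (hv : v ≠ 0) :
    ∫ x, doubleWell.derivative.eval x ∂gaussianReal ξ v = ξ ^ 3 + 3 * v * ξ - ξ := by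
  have h : ∀ x, doubleWell.derivative.eval x = x ^ 3 - x ^ 1 := fun x => by
    simp only [doubleWell, derivative_sub, derivative_C_mul_X_pow, eval_sub, eval_mul, eval_C,
      eval_pow, eval_X]
    norm_num
  simp only [h]
  rw [integral_sub (integrable_pow_gaussianReal 3) (integrable_pow_gaussianReal 1),
    integral_pow_three_gaussianReal hv]
  simp

lemma integral_mul_exp_neg_sq_sub_div_eq (ξ : ℝ) {v : ℝ} (hv : 0 < v) (g c : ℝ → ℝ) :
    (∫ y, g y * exp (-(y - ξ) ^ 2 / (2 * v) - c y)) / ∫ y, exp (-(y - ξ) ^ 2 / (2 * v) - c y)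
      = (∫ y, g y * exp (-c y) ∂gaussianReal ξ v.toNNReal)
          / ∫ y, exp (-c y) ∂gaussianReal ξ v.toNNReal := by
  have hdensity : ∀ F : ℝ → ℝ, ∫ y, exp (-(y - ξ) ^ 2 / (2 * v)) * F y
      = √(2 * π * v) * ∫ y, F y ∂gaussianReal ξ v.toNNReal := fun F => by
    rw [integral_gaussianReal_eq_integral_smul (by simpa using hv)]
    simp only [gaussianPDFReal, Real.coe_toNNReal _ hv.le, smul_eq_mul, mul_assoc,
      integral_const_mul]
    rw [← mul_assoc, mul_inv_cancel₀ (by positivity), one_mul]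
  simp only [sub_eq_add_neg _ (c _), exp_add, mul_left_comm (g _)]
  rw [hdensity, hdensity, mul_div_mul_left _ _ (by positivity)]

/-- With `η = 2/σ²`, `V(y) = y⁴/4 − y²/2`,
`Z(h) = ∫ exp(−(y−ξ)²/(2v) − hηV(y)) dy` and
`m(h) = Z(h)⁻¹ ∫ y exp(−(y−ξ)²/(2v) − hηV(y)) dy`, one has as `h → 0⁺`:
`m(h) = ξ − hηv(ξ³ + 3vξ − ξ) + O(h²)`. -/
theorem stmt_8 (σ v ξ : ℝ) (hσ : 0 < σ) (hv : 0 < v) :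
    (fun h : ℝ =>
        (∫ y : ℝ, y * Real.exp (-(y - ξ) ^ 2 / (2 * v)
            - h * (2 / σ ^ 2) * (y ^ 4 / 4 - y ^ 2 / 2)))
          / (∫ y : ℝ, Real.exp (-(y - ξ) ^ 2 / (2 * v)
            - h * (2 / σ ^ 2) * (y ^ 4 / 4 - y ^ 2 / 2)))
        - (ξ - h * (2 / σ ^ 2) * v * (ξ ^ 3 + 3 * v * ξ - ξ)))
      =O[nhdsWithin 0 (Set.Ioi 0)] (fun h : ℝ => h ^ 2) := by
  have hv' : v.toNNReal ≠ 0 := by simpa using hv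
  set η := 2 / σ ^ 2
  have hη : 0 < η := by positivity
  have hbdd : BddBelow (Set.range fun y => (C η * doubleWell).eval y) := ⟨-(η / 4), by
    rintro _ ⟨y, rfl⟩
    simp only [eval_mul, eval_C]
    nlinarith [neg_quarter_le_eval_doubleWell y]⟩
  have key := isBigO_integral_mul_exp_neg_eval_div_sub_gaussianReal (ξ := ξ) hv' _ hbdd
  simp only [eval_mul, eval_C, eval_doubleWell, derivative_C_mul, integral_const_mul,
    integral_eval_derivative_doubleWell_gaussianReal hv', Real.coe_toNNReal _ hv.le] at key
  refine key.congr' (Eventually.of_forall fun h => ?_) EventuallyEq.rfl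
  dsimp only
  rw [integral_mul_exp_neg_sq_sub_div_eq ξ hv (fun y => y)
    (fun y => h * η * (y ^ 4 / 4 - y ^ 2 / 2))]
  simp only [mul_assoc]
  ring
end

section
/- Let K ≥ 1, ρ_1,…,ρ_K > 0 with ∑ρ_k = 1, α_1,…,α_K ∈ ℝ with ∑ρ_kα_k = 0, θ̄ > 0, and t ≥ 0. For δ ∈ ℝ let M_δ be the K×K matrix with entries (M_δ)_{ij} = −θ̄(1 + δα_i)(δ_{ij} − ρ_j), let ϱ = (ρ_1,…,ρ_K) and R = diag(ρ_1,…,ρ_K). Then, as δ → 0, ϱᵀ·exp(t·M_δ)·R^{−1}·exp(t·M_δ)ᵀ·ϱ = 1 + δ²·(1 − e^{−θ̄t})²·(∑_{k=1}^K ρ_k α_k²) + O(δ³). -/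
/-!
Write `A = t M_δ` and `y = exp(Aᵀ) ϱ`, so that the quadratic form is `∑ y_k² / ρ_k`. Since the
rows of `M_δ` sum to zero, `∑ y_k = ∑ ρ_k = 1`, and the form equals `1 + ∑ (y_k - ρ_k)² / ρ_k`.
Because `∑ ρ_k α_k = 0`, `Aᵀ ϱ = -θ̄ t δ (ρ_k α_k)_k` is of order `δ`, so the identity
`eˣ = 1 + φ₁(x) x` with `φ₁(x) = ∑ xⁿ / (n+1)!` gives `y - ϱ = δ z_δ` with
`z_δ = -θ̄ t φ₁(Aᵀ) (ρ_k α_k)_k`. Hence the form is exactly `1 + δ² ∑ z_{δ,k}² / ρ_k`. At `δ = 0`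
the vector `(ρ_k α_k)_k` is an eigenvector of `Aᵀ` for the eigenvalue `-θ̄ t`, so
`z_0 = (e^{-θ̄t} - 1)(ρ_k α_k)_k`, and `φ₁` is analytic, so `z_δ - z_0 = O(δ)`.
-/

open Matrix Filter Asymptotics NormedSpace FormalMultilinearSeries
open scoped Nat

noncomputable def phiOne {𝔸 : Type*} [Ring 𝔸] [Algebra ℝ 𝔸] [TopologicalSpace 𝔸] (x : 𝔸) : 𝔸 :=
  ∑' n : ℕ, ((n + 1)! : ℝ)⁻¹ • x ^ n

section NormedAlgebra

variable (𝔸 : Type*) [NormedRing 𝔸] [NormedAlgebra ℝ 𝔸]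

noncomputable abbrev phiOneSeries : FormalMultilinearSeries ℝ 𝔸 𝔸 :=
  ofScalars 𝔸 fun n => ((n + 1)! : ℝ)⁻¹

lemma phiOneSeries_radius : (phiOneSeries 𝔸).radius = ⊤ := by
  refine ofScalars_radius_eq_top_of_tendsto 𝔸 _ (.of_forall fun n => by positivity) ?_
  have hratio (n : ℕ) :
      ‖((n + 1 + 1)! : ℝ)⁻¹‖ / ‖((n + 1)! : ℝ)⁻¹‖ = 1 / ((n + 1 : ℕ) + 1) := by
    rw [Nat.factorial_succ (n + 1), Real.norm_of_nonneg (by positivity),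
      Real.norm_of_nonneg (by positivity)]
    push_cast
    field_simp
  simp_rw [hratio]
  exact (tendsto_add_atTop_iff_nat 1).2 (tendsto_one_div_add_atTop_nhds_zero_nat (𝕜 := ℝ))

lemma phiOne_eq_sum : (phiOne : 𝔸 → 𝔸) = (phiOneSeries 𝔸).sum :=
  (ofScalarsSum_eq_tsum _).symm

variable {𝔸} [CompleteSpace 𝔸]

lemma hasSum_phiOne (x : 𝔸) : HasSum (fun n => ((n + 1)! : ℝ)⁻¹ • x ^ n) (phiOne x) := by
  have h := (phiOneSeries 𝔸).hasSum (x := x) (by simp [phiOneSeries_radius])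
  simpa [ofScalars_apply_eq, phiOne_eq_sum] using h

lemma analyticAt_phiOne (x : 𝔸) : AnalyticAt ℝ phiOne x := by
  have h := (phiOneSeries 𝔸).hasFPowerSeriesOnBall (by simp [phiOneSeries_radius])
  rw [phiOneSeries_radius] at h
  rw [phiOne_eq_sum]
  exact h.analyticAt_of_mem (by simp)

lemma exp_eq_one_add_phiOne_mul (x : 𝔸) : exp x = 1 + phiOne x * x := by
  refine (exp_series_hasSum_exp' (𝕂 := ℝ) x).unique ((hasSum_nat_add_iff' 1).1 ?_)
  simpa [pow_succ, smul_mul_assoc] using (hasSum_phiOne x).mul_right x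

end NormedAlgebra

namespace Matrix

variable {n : Type*} [Fintype n]

lemma dotProduct_mul_mul_transpose_mulVec {R : Type*} [CommSemiring R] (E D : Matrix n n R)
    (v : n → R) :
    v ⬝ᵥ (E * D * Eᵀ) *ᵥ v = (Eᵀ *ᵥ v) ⬝ᵥ D *ᵥ (Eᵀ *ᵥ v) := by
  rw [← mulVec_mulVec, dotProduct_mulVec, ← vecMul_vecMul, ← dotProduct_mulVec, mulVec_transpose]

variable [DecidableEq n] {A : Matrix n n ℝ} {v : n → ℝ}

lemma pow_mulVec_of_mulVec_eq_smul {s : ℝ} (hv : A *ᵥ v = s • v) (k : ℕ) :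
    A ^ k *ᵥ v = s ^ k • v := by
  induction k with
  | zero => simp
  | succ k ih => rw [pow_succ, ← mulVec_mulVec, hv, mulVec_smul, ih, smul_smul, pow_succ']

lemma mulVec_eq_smul_of_hasSum {c : ℕ → ℝ} {S : Matrix n n ℝ} {s σ : ℝ}
    (hS : HasSum (fun k => c k • A ^ k) S) (hσ : HasSum (fun k => c k * s ^ k) σ)
    (hv : A *ᵥ v = s • v) : S *ᵥ v = σ • v := by
  refine (hS.map (mulVec.addMonoidHomLeft v)
    (continuous_id.matrix_mulVec continuous_const)).unique ?_
  convert hσ.smul_const v using 2 with k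
  simp [mulVec.addMonoidHomLeft, smul_mulVec, pow_mulVec_of_mulVec_eq_smul hv, smul_smul]

lemma phiOne_mulVec_of_mulVec_eq_smul {s : ℝ} (hv : A *ᵥ v = s • v) :
    phiOne A *ᵥ v = phiOne s • v :=
  open scoped Norms.Operator in
  mulVec_eq_smul_of_hasSum (hasSum_phiOne A) (hasSum_phiOne s) hv

lemma exp_mulVec_of_mulVec_eq_smul {δ : ℝ} {w : n → ℝ} (hv : A *ᵥ v = δ • w) :
    exp A *ᵥ v = v + δ • (phiOne A *ᵥ w) := by
  have h : exp A = 1 + phiOne A * A := by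
    open scoped Norms.Operator in exact exp_eq_one_add_phiOne_mul A
  rw [h, add_mulVec, one_mulVec, ← mulVec_mulVec, hv, mulVec_smul]

lemma differentiableAt_phiOne_add_smul_mulVec (S : Matrix n n ℝ) (w : n → ℝ) (δ₀ : ℝ) :
    DifferentiableAt ℝ (fun δ : ℝ => phiOne (A + δ • S) *ᵥ w) δ₀ := by
  open scoped Norms.Operator in
  have h : DifferentiableAt ℝ (fun δ : ℝ => phiOne (A + δ • S)) δ₀ :=
    (analyticAt_phiOne _).differentiableAt.comp δ₀ (by fun_prop)
  exact (LinearMap.toContinuousLinearMap ((mulVecBilin ℝ ℝ).flip w)).differentiableAt.comp δ₀ h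

lemma sum_exp_transpose_mulVec (hA : A *ᵥ 1 = 0) (v : n → ℝ) :
    ∑ k, (exp Aᵀ *ᵥ v) k = ∑ k, v k := by
  have hexp : exp A *ᵥ 1 = 1 := by
    simpa using exp_mulVec_of_mulVec_eq_smul (δ := 0) (w := 0) (by simpa using hA)
  rw [← one_dotProduct, dotProduct_mulVec, exp_transpose, vecMul_transpose, hexp, one_dotProduct]

lemma dotProduct_inv_diagonal_mulVec {ρ : n → ℝ} (hρ : ∀ k, ρ k ≠ 0) (a : n → ℝ) :
    a ⬝ᵥ (diagonal ρ)⁻¹ *ᵥ a = ∑ k, a k ^ 2 / ρ k := by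
  have hinv : (diagonal ρ)⁻¹ = diagonal ρ⁻¹ :=
    inv_eq_left_inv (by simp [diagonal_mul_diagonal, hρ])
  simp only [hinv, dotProduct, mulVec_diagonal, Pi.inv_apply]
  exact Finset.sum_congr rfl fun k _ => by ring

end Matrix

lemma sum_sq_div_eq_one_add_sum_sub_sq_div {n : Type*} [Fintype n] {ρ a : n → ℝ}
    (hρ : ∀ k, ρ k ≠ 0) (hρ1 : ∑ k, ρ k = 1) (ha : ∑ k, a k = 1) :
    ∑ k, a k ^ 2 / ρ k = 1 + ∑ k, (a k - ρ k) ^ 2 / ρ k := by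
  have hk : ∀ k, (a k - ρ k) ^ 2 / ρ k = a k ^ 2 / ρ k - 2 * a k + ρ k := fun k => by
    field_simp [hρ k]
    ring
  simp only [hk, Finset.sum_add_distrib, Finset.sum_sub_distrib, ← Finset.mul_sum, ha, hρ1]
  ring

lemma dotProduct_exp_mul_inv_diagonal_mul_exp_transpose_mulVec {n : Type*} [Fintype n]
    [DecidableEq n] {ρ : n → ℝ} (hρ : ∀ k, ρ k ≠ 0) (hsum : ∑ k, ρ k = 1) {A : Matrix n n ℝ}
    {δ : ℝ} {w : n → ℝ} (hA : A *ᵥ 1 = 0) (hAρ : Aᵀ *ᵥ ρ = δ • w) :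
    ρ ⬝ᵥ (exp A * (diagonal ρ)⁻¹ * (exp A)ᵀ) *ᵥ ρ
      = 1 + δ ^ 2 * ∑ k, (phiOne Aᵀ *ᵥ w) k ^ 2 / ρ k := by
  have hmass : ∑ k, (exp Aᵀ *ᵥ ρ) k = 1 := (sum_exp_transpose_mulVec hA ρ).trans hsum
  rw [dotProduct_mul_mul_transpose_mulVec, ← exp_transpose, dotProduct_inv_diagonal_mulVec hρ,
    sum_sq_div_eq_one_add_sum_sub_sq_div hρ hsum hmass, exp_mulVec_of_mulVec_eq_smul hAρ]
  simp [mul_pow, Finset.mul_sum, mul_div_assoc]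

section DriftMatrix

variable {n : Type*} [DecidableEq n] (θ : ℝ) (ρ α : n → ℝ)

/-- The paper's `M_δ = -θ̄ diag(1 + δα) (I - 𝟙ϱᵀ)`. -/
def driftMatrix (δ : ℝ) : Matrix n n ℝ :=
  diagonal (fun i => -θ * (1 + δ * α i)) - vecMulVec (fun i => -θ * (1 + δ * α i)) ρ

lemma driftMatrix_add_smul (δ : ℝ) :
    driftMatrix θ ρ α δ
      = driftMatrix θ ρ α 0 + δ • (driftMatrix θ ρ α 1 - driftMatrix θ ρ α 0) := by
  ext i j
  by_cases h : i = j <;> simp [driftMatrix, diagonal, vecMulVec, h] <;> ring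

lemma smul_of_eq_driftMatrix (t δ : ℝ) :
    t • of (fun i j => -θ * (1 + δ * α i) * ((if i = j then (1 : ℝ) else 0) - ρ j))
      = driftMatrix (t * θ) ρ α δ := by
  ext i j
  by_cases h : i = j <;> simp [driftMatrix, diagonal, vecMulVec, h] <;> ring

variable [Fintype n]

lemma differentiableAt_phiOne_driftMatrix_transpose_mulVec (w : n → ℝ) (δ₀ : ℝ) :
    DifferentiableAt ℝ (fun δ => phiOne (driftMatrix θ ρ α δ)ᵀ *ᵥ w) δ₀ := by
  have h_affine : (fun δ => phiOne (driftMatrix θ ρ α δ)ᵀ *ᵥ w) = fun δ =>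
      phiOne ((driftMatrix θ ρ α 0)ᵀ + δ • (driftMatrix θ ρ α 1 - driftMatrix θ ρ α 0)ᵀ) *ᵥ w :=
    funext fun δ => by rw [driftMatrix_add_smul θ ρ α δ, transpose_add, transpose_smul]
  rw [h_affine]
  exact differentiableAt_phiOne_add_smul_mulVec _ _ δ₀

variable {ρ α}

lemma driftMatrix_mulVec_one (hsum : ∑ k, ρ k = 1) (δ : ℝ) : driftMatrix θ ρ α δ *ᵥ 1 = 0 := by
  ext i
  simp [driftMatrix, sub_mulVec, vecMulVec_mulVec, mulVec_diagonal, dotProduct_one, hsum]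

lemma driftMatrix_transpose_mulVec (δ : ℝ) (v : n → ℝ) :
    (driftMatrix θ ρ α δ)ᵀ *ᵥ v = (fun i => -θ * (1 + δ * α i)) * v
      - ((fun i => -θ * (1 + δ * α i)) ⬝ᵥ v) • ρ := by
  ext i
  simp [driftMatrix, transpose_sub, sub_mulVec, vecMulVec_mulVec, mulVec_diagonal]

lemma driftMatrix_transpose_mulVec_self (hsum : ∑ k, ρ k = 1) (hcen : ∑ k, ρ k * α k = 0)
    (δ : ℝ) : (driftMatrix θ ρ α δ)ᵀ *ᵥ ρ = δ • (-θ • (ρ * α)) := by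
  have hdot : (fun i => -θ * (1 + δ * α i)) ⬝ᵥ ρ = -θ :=
    calc ∑ i, -θ * (1 + δ * α i) * ρ i = -θ * ∑ i, ρ i - θ * δ * ∑ i, ρ i * α i := by
          rw [Finset.mul_sum, Finset.mul_sum, ← Finset.sum_sub_distrib]
          exact Finset.sum_congr rfl fun i _ => by ring
      _ = -θ := by rw [hsum, hcen]; ring
  rw [driftMatrix_transpose_mulVec, hdot]
  ext i
  simp only [Pi.sub_apply, Pi.mul_apply, Pi.smul_apply, smul_eq_mul]
  ring

lemma driftMatrix_zero_transpose_mulVec (hcen : ∑ k, ρ k * α k = 0) :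
    (driftMatrix θ ρ α 0)ᵀ *ᵥ (ρ * α) = -θ • (ρ * α) := by
  ext i
  simp [driftMatrix_transpose_mulVec, dotProduct, ← Finset.mul_sum, hcen]

lemma phiOne_driftMatrix_zero_transpose_mulVec (hcen : ∑ k, ρ k * α k = 0) :
    phiOne (driftMatrix θ ρ α 0)ᵀ *ᵥ (-θ • (ρ * α)) = (Real.exp (-θ) - 1) • (ρ * α) := by
  rw [mulVec_smul, phiOne_mulVec_of_mulVec_eq_smul (driftMatrix_zero_transpose_mulVec θ hcen),
    smul_smul, Real.exp_eq_exp_ℝ, exp_eq_one_add_phiOne_mul]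
  ring_nf

end DriftMatrix

lemma isBigO_sq_mul_sub_of_differentiableAt {q : ℝ → ℝ} (hq : DifferentiableAt ℝ q 0) :
    (fun δ => δ ^ 2 * q δ - δ ^ 2 * q 0) =O[nhds 0] fun δ => δ ^ 3 := by
  have h := (isBigO_refl (fun δ : ℝ => δ ^ 2) (nhds 0)).mul hq.isBigO_sub
  simp only [sub_zero, ← pow_succ, mul_sub] at h
  exact h

theorem stmt_17_general (K : ℕ) (ρ α : Fin K → ℝ)
    (hρ : ∀ k, 0 < ρ k) (hsum : ∑ k, ρ k = 1) (hcen : ∑ k, ρ k * α k = 0)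
    (θ : ℝ) (t : ℝ)
    (M : ℝ → Matrix (Fin K) (Fin K) ℝ)
    (hM : ∀ δ : ℝ, M δ = Matrix.of fun i j =>
      -θ * (1 + δ * α i) * ((if i = j then (1:ℝ) else 0) - ρ j))
    (R : Matrix (Fin K) (Fin K) ℝ) (hR : R = Matrix.diagonal ρ) :
    (fun δ : ℝ =>
        ρ ⬝ᵥ (NormedSpace.exp (t • M δ) * R⁻¹
            * (NormedSpace.exp (t • M δ))ᵀ).mulVec ρ
          - (1 + δ ^ 2 * (1 - Real.exp (-(θ * t))) ^ 2 * ∑ k, ρ k * α k ^ 2))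
      =O[nhds 0] (fun δ : ℝ => δ ^ 3) := by
  have hρ0 : ∀ k, ρ k ≠ 0 := fun k => (hρ k).ne'
  obtain ⟨z, hz_def⟩ : ∃ z : ℝ → Fin K → ℝ,
      ∀ δ, phiOne (driftMatrix (t * θ) ρ α δ)ᵀ *ᵥ (-(t * θ) • (ρ * α)) = z δ :=
    ⟨_, fun _ => rfl⟩
  have hform (δ : ℝ) : ρ ⬝ᵥ (exp (t • M δ) * R⁻¹ * (exp (t • M δ))ᵀ) *ᵥ ρ
      = 1 + δ ^ 2 * ∑ k, z δ k ^ 2 / ρ k := by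
    rw [hM, smul_of_eq_driftMatrix, hR, dotProduct_exp_mul_inv_diagonal_mul_exp_transpose_mulVec
      hρ0 hsum (driftMatrix_mulVec_one _ hsum δ) (driftMatrix_transpose_mulVec_self _ hsum hcen δ),
      hz_def]
  have hq0 : ∑ k, z 0 k ^ 2 / ρ k = (1 - Real.exp (-(θ * t))) ^ 2 * ∑ k, ρ k * α k ^ 2 := by
    rw [← hz_def, phiOne_driftMatrix_zero_transpose_mulVec _ hcen, Finset.mul_sum, mul_comm θ]
    refine Finset.sum_congr rfl fun k _ => ?_
    simp only [Pi.smul_apply, Pi.mul_apply, smul_eq_mul]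
    field_simp [hρ0 k]
    ring
  have hz_diff : DifferentiableAt ℝ z 0 := by
    simpa only [hz_def] using differentiableAt_phiOne_driftMatrix_transpose_mulVec (t * θ) ρ α
      (-(t * θ) • (ρ * α)) 0
  have hq : DifferentiableAt ℝ (fun δ => ∑ k, z δ k ^ 2 / ρ k) 0 :=
    .fun_sum fun k _ => ((differentiableAt_pi.1 hz_diff k).pow 2).div_const _
  refine (isBigO_sq_mul_sub_of_differentiableAt hq).congr_left fun δ => ?_
  rw [hform, hq0]
  ring

/-- Small-diversity expansion of the quadratic form: with group fractions
`ρ_k > 0` summing to 1, centered perturbations `∑ ρ_kα_k = 0`, `θ̄ > 0`, `t ≥ 0`,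
drift matrices `(M_δ)_{ij} = −θ̄(1 + δα_i)(δ_{ij} − ρ_j)` and `R = diag(ρ)`:
`ϱᵀ e^{tM_δ} R⁻¹ (e^{tM_δ})ᵀ ϱ = 1 + δ²(1 − e^{−θ̄t})²(∑ ρ_kα_k²) + O(δ³)`
as `δ → 0`. -/
theorem stmt_17 (K : ℕ) (hK : 1 ≤ K) (ρ α : Fin K → ℝ)
    (hρ : ∀ k, 0 < ρ k) (hsum : ∑ k, ρ k = 1) (hcen : ∑ k, ρ k * α k = 0)
    (θ : ℝ) (hθ : 0 < θ) (t : ℝ) (ht : 0 ≤ t)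
    (M : ℝ → Matrix (Fin K) (Fin K) ℝ)
    (hM : ∀ δ : ℝ, M δ = Matrix.of fun i j =>
      -θ * (1 + δ * α i) * ((if i = j then (1:ℝ) else 0) - ρ j))
    (R : Matrix (Fin K) (Fin K) ℝ) (hR : R = Matrix.diagonal ρ) :
    (fun δ : ℝ =>
        ρ ⬝ᵥ (NormedSpace.exp (t • M δ) * R⁻¹
            * (NormedSpace.exp (t • M δ))ᵀ).mulVec ρ
          - (1 + δ ^ 2 * (1 - Real.exp (-(θ * t))) ^ 2 * ∑ k, ρ k * α k ^ 2))
      =O[nhds 0] (fun δ : ℝ => δ ^ 3) :=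
  stmt_17_general K ρ α hρ hsum hcen θ t M hM R hR
end

section
/- Let K ≥ 1, ρ_1,…,ρ_K > 0 with ∑ρ_k = 1, α_1,…,α_K ∈ ℝ with ∑ρ_kα_k = 0, θ̄ > 0, and T > 0. For δ ∈ ℝ let M_δ be the K×K matrix with entries (M_δ)_{ij} = −θ̄(1 + δα_i)(δ_{ij} − ρ_j), let ϱ = (ρ_1,…,ρ_K) and R = diag(ρ_1,…,ρ_K). Then, as δ → 0, ∫₀ᵀ ϱᵀ·exp(s·M_δ)·R^{−1}·exp(s·M_δ)ᵀ·ϱ ds = T + δ²·(∑_{k=1}^K ρ_k α_k²)·( ∫₀ᵀ (1 − e^{−θ̄s})² ds ) + O(δ³). Equivalently, the variance σ_T² = (σ²/N)∫₀ᵀ ϱᵀe^{M_δ s}R^{−1}(e^{M_δ s})ᵀϱ ds satisfies σ_T² = (σ²T/N)·[ 1 + δ²(∑ρ_kα_k²)·( (1/T)∫₀ᵀ(1 − e^{−θ̄s})² ds ) + O(δ³) ] for any fixed σ > 0 and N ≥ 1. -/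
/-!
Write `u(s) = ϱᵀ e^{s M_δ}`; the integrand is then `∑ₖ u_k(s)² / ρ_k`. Since `ϱᵀ M_δ = -θ̄ δ ϱα`,
the profile `v(s) = ϱ + δ (e^{-θ̄ s} - 1) ϱα` solves `v' = v M_δ` up to a forcing of size `δ²`,
so Grönwall's inequality gives `u = v + ψ` with `ψ = O(δ²)` uniformly on `[0, T]`. The rows of
`M_δ` sum to zero, hence `∑ₖ u_k` is conserved and `∑ₖ ψ_k = 0` exactly. Expanding
`∑ₖ u_k² / ρ_k`, the terms linear in `δ α` and in `ψ` vanish, leaving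
`1 + δ² (∑ ρ_k α_k²)(1 - e^{-θ̄ s})² + O(δ³)`; integrating over `[0, T]` gives the claim.
-/

open Matrix Filter Asymptotics intervalIntegral

namespace MeanField

theorem abs_exp_sub_one_le_one_of_nonpos {x : ℝ} (hx : x ≤ 0) : |Real.exp x - 1| ≤ 1 := by
  rw [abs_sub_comm, abs_of_nonneg (sub_nonneg.2 (Real.exp_le_one_iff.2 hx))]
  linarith [Real.exp_pos x]

theorem gronwallBound_zero_le {K ε x : ℝ} (hK : 0 ≤ K) (hε : 0 ≤ ε) :
    gronwallBound 0 K ε x ≤ ε * x * Real.exp (K * x) := by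
  rcases hK.eq_or_lt with rfl | hK
  · simp [gronwallBound_K0]
  have key : Real.exp (K * x) - 1 ≤ K * x * Real.exp (K * x) := by
    have h := mul_le_mul_of_nonneg_right (Real.add_one_le_exp (-(K * x)))
      (Real.exp_pos (K * x)).le
    rw [add_mul, ← Real.exp_add, neg_add_cancel, Real.exp_zero] at h
    linarith
  rw [gronwallBound_of_K_ne_0 hK.ne']
  calc 0 * Real.exp (K * x) + ε / K * (Real.exp (K * x) - 1)
      = ε * (Real.exp (K * x) - 1) / K := by ring
    _ ≤ ε * (K * x * Real.exp (K * x)) / K := by gcongr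
    _ = ε * x * Real.exp (K * x) := by field_simp

theorem isBigO_intervalIntegral_of_norm_le {α E F : Type*} [NormedAddCommGroup E]
    [NormedSpace ℝ E] [Norm F] {l : Filter α} {f : α → ℝ → E} {g : α → F} {a b C : ℝ}
    (h : ∀ᶠ x in l, ∀ s ∈ Set.uIoc a b, ‖f x s‖ ≤ C * ‖g x‖) :
    (fun x => ∫ s in a..b, f x s) =O[l] g :=
  isBigO_iff.2 ⟨C * |b - a|, h.mono fun x hx =>
    (norm_integral_le_of_norm_le_const hx).trans_eq (by ring)⟩

theorem dotProduct_mulVec_mul_diagonal_mul_transpose {m n R : Type*} [Fintype m] [Fintype n]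
    [DecidableEq n] [CommRing R] (v : m → R) (d : n → R) (E : Matrix m n R) :
    v ⬝ᵥ (E * diagonal d * Eᵀ) *ᵥ v = ∑ k, d k * (v ᵥ* E) k ^ 2 := by
  rw [dotProduct_mulVec, ← vecMul_vecMul, ← vecMul_vecMul, vecMul_transpose, dotProduct_comm,
    dotProduct_mulVec]
  simp only [dotProduct, vecMul_diagonal]
  exact Finset.sum_congr rfl fun k _ => by ring

theorem sum_inv_mul_sq_eq {ι : Type*} [Fintype ι] {ρ α ψ : ι → ℝ} (hρ : ∀ k, ρ k ≠ 0)
    (hsum : ∑ k, ρ k = 1) (hcen : ∑ k, ρ k * α k = 0) (hψ : ∑ k, ψ k = 0) (c : ℝ) :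
    ∑ k, (ρ k)⁻¹ * (ρ k + c * (ρ k * α k) + ψ k) ^ 2
      = 1 + c ^ 2 * ∑ k, ρ k * α k ^ 2
        + (∑ k, (ρ k)⁻¹ * ψ k ^ 2 + 2 * c * ∑ k, α k * ψ k) := by
  have h : ∀ k, (ρ k)⁻¹ * (ρ k + c * (ρ k * α k) + ψ k) ^ 2
      = ρ k + 2 * c * (ρ k * α k) + c ^ 2 * (ρ k * α k ^ 2) + 2 * ψ k
        + ((ρ k)⁻¹ * ψ k ^ 2 + 2 * c * (α k * ψ k)) := fun k => by
    field_simp [hρ k]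
    ring
  simp only [h, Finset.sum_add_distrib, ← Finset.mul_sum, hsum, hcen, hψ]
  ring

theorem abs_sum_inv_mul_sq_add_le {ι : Type*} [Fintype ι] {ρ α : ι → ℝ} (hρ : ∀ k, 0 < ρ k)
    (ψ : ι → ℝ) (c : ℝ) :
    |∑ k, (ρ k)⁻¹ * ψ k ^ 2 + 2 * c * ∑ k, α k * ψ k|
      ≤ (∑ k, (ρ k)⁻¹) * ‖ψ‖ ^ 2 + 2 * |c| * ((∑ k, |α k|) * ‖ψ‖) := by
  have hψ : ∀ k, |ψ k| ≤ ‖ψ‖ := norm_le_pi_norm ψ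
  refine (abs_add_le _ _).trans (add_le_add ?_ ?_)
  · rw [Finset.sum_mul]
    refine (Finset.abs_sum_le_sum_abs _ _).trans (Finset.sum_le_sum fun k _ => ?_)
    rw [abs_mul, abs_of_pos (inv_pos.2 (hρ k)), abs_pow]
    exact mul_le_mul_of_nonneg_left (pow_le_pow_left₀ (abs_nonneg _) (hψ k) 2)
      (inv_pos.2 (hρ k)).le
  · rw [abs_mul, abs_mul, abs_two, Finset.sum_mul]
    gcongr
    refine (Finset.abs_sum_le_sum_abs _ _).trans (Finset.sum_le_sum fun k _ => ?_)
    rw [abs_mul]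
    exact mul_le_mul_of_nonneg_left (hψ k) (abs_nonneg _)

variable {ι : Type*} [DecidableEq ι]

def driftMatrix (ρ α : ι → ℝ) (θ δ : ℝ) : Matrix ι ι ℝ :=
  Matrix.of fun i j => -θ * (1 + δ * α i) * ((if i = j then (1:ℝ) else 0) - ρ j)

/-- The first-order (in `δ`) approximation of `s ↦ ϱᵀ e^{s M_δ}`. -/
noncomputable def firstOrderProfile (ρ α : ι → ℝ) (θ δ s : ℝ) : ι → ℝ :=
  ρ + (δ * (Real.exp (-(θ * s)) - 1)) • fun i => ρ i * α i

variable {ρ α : ι → ℝ} {θ : ℝ}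

theorem driftMatrix_eq_add_smul (δ : ℝ) :
    driftMatrix ρ α θ δ
      = driftMatrix ρ α θ 0 + δ • (driftMatrix ρ α θ 1 - driftMatrix ρ α θ 0) := by
  ext i j
  simp only [driftMatrix, Matrix.add_apply, Matrix.smul_apply, Matrix.sub_apply, of_apply,
    smul_eq_mul]
  ring

variable [Fintype ι]

section LinftyOpNorm

attribute [local instance] Matrix.linftyOpNormedRing Matrix.linftyOpNormedAlgebra

theorem hasDerivAt_vecMul_exp_smul (v : ι → ℝ) (A : Matrix ι ι ℝ) (s : ℝ) :
    HasDerivAt (fun t : ℝ => v ᵥ* NormedSpace.exp (t • A))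
      ((v ᵥ* NormedSpace.exp (s • A)) ᵥ* A) s := by
  let L : Matrix ι ι ℝ →L[ℝ] ι → ℝ := LinearMap.toContinuousLinearMap (vecMulBilin ℝ ℝ v)
  rw [vecMul_vecMul]
  exact L.hasFDerivAt.comp_hasDerivAt s (hasDerivAt_exp_smul_const A s)

theorem exists_norm_vecMul_le_of_abs_le_one (A B : Matrix ι ι ℝ) :
    ∃ L, 0 ≤ L ∧ ∀ δ : ℝ, |δ| ≤ 1 → ∀ v : ι → ℝ, ‖v ᵥ* (A + δ • B)‖ ≤ L * ‖v‖ := by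
  refine ⟨‖Aᵀ‖ + ‖Bᵀ‖, by positivity, fun δ hδ v => ?_⟩
  rw [← mulVec_transpose, transpose_add, transpose_smul, add_mulVec, smul_mulVec]
  calc ‖Aᵀ *ᵥ v + δ • (Bᵀ *ᵥ v)‖ ≤ ‖Aᵀ‖ * ‖v‖ + 1 * (‖Bᵀ‖ * ‖v‖) := by
        refine (norm_add_le _ _).trans (add_le_add (linfty_opNorm_mulVec _ _) ?_)
        rw [norm_smul, Real.norm_eq_abs]
        exact mul_le_mul hδ (linfty_opNorm_mulVec _ _) (norm_nonneg _) zero_le_one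
    _ = (‖Aᵀ‖ + ‖Bᵀ‖) * ‖v‖ := by ring

end LinftyOpNorm

theorem sum_vecMul_exp_smul {A : Matrix ι ι ℝ} (hA : ∀ v : ι → ℝ, ∑ j, (v ᵥ* A) j = 0)
    (v : ι → ℝ) (s : ℝ) : ∑ j, (v ᵥ* NormedSpace.exp (s • A)) j = ∑ j, v j := by
  have hderiv : ∀ t, HasDerivAt (fun t : ℝ => ∑ j, (v ᵥ* NormedSpace.exp (t • A)) j) 0 t :=
    fun t => (HasDerivAt.fun_sum (u := Finset.univ) fun j _ =>
      hasDerivAt_pi.1 (hasDerivAt_vecMul_exp_smul v A t) j).congr_deriv (hA _)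
  have := is_const_of_deriv_eq_zero (fun t => (hderiv t).differentiableAt)
    (fun t => (hderiv t).deriv) s 0
  simpa [NormedSpace.exp_zero] using this

theorem vecMul_driftMatrix_apply (δ : ℝ) (v : ι → ℝ) (j : ι) :
    (v ᵥ* driftMatrix ρ α θ δ) j
      = -θ * ((1 + δ * α j) * v j - ρ j * ∑ i, (1 + δ * α i) * v i) := by
  simp only [driftMatrix, vecMul, dotProduct, of_apply, mul_sub, Finset.sum_sub_distrib,
    mul_ite, mul_one, mul_zero, Finset.sum_ite_eq', Finset.mem_univ, if_true, Finset.mul_sum]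
  congr 1 <;> [ring; exact Finset.sum_congr rfl fun i _ => by ring]

theorem sum_vecMul_driftMatrix (hsum : ∑ k, ρ k = 1) (δ : ℝ) (v : ι → ℝ) :
    ∑ j, (v ᵥ* driftMatrix ρ α θ δ) j = 0 := by
  simp only [vecMul_driftMatrix_apply, ← Finset.mul_sum, Finset.sum_sub_distrib,
    ← Finset.sum_mul, hsum, one_mul, sub_self, mul_zero]

theorem vecMul_driftMatrix_add_smul (hsum : ∑ k, ρ k = 1) (hcen : ∑ k, ρ k * α k = 0)
    (δ c : ℝ) :
    (ρ + c • fun i => ρ i * α i) ᵥ* driftMatrix ρ α θ δ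
      = (-θ * (δ + c)) • (fun i => ρ i * α i)
        + (c * δ) • fun j => -θ * (α j * (ρ j * α j) - (∑ k, ρ k * α k ^ 2) * ρ j) := by
  have hmass : ∑ i, (1 + δ * α i) * (ρ + c • fun i => ρ i * α i) i
      = 1 + c * δ * ∑ k, ρ k * α k ^ 2 := by
    simp only [Pi.add_apply, Pi.smul_apply, smul_eq_mul]
    have h : ∀ i, (1 + δ * α i) * (ρ i + c * (ρ i * α i))
        = ρ i + (δ + c) * (ρ i * α i) + c * δ * (ρ i * α i ^ 2) := fun i => by ring
    simp only [h, Finset.sum_add_distrib, ← Finset.mul_sum, hsum, hcen]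
    ring
  ext j
  rw [vecMul_driftMatrix_apply, hmass]
  simp only [Pi.add_apply, Pi.smul_apply, smul_eq_mul]
  ring

theorem hasDerivAt_firstOrderProfile (hsum : ∑ k, ρ k = 1) (hcen : ∑ k, ρ k * α k = 0)
    (δ t : ℝ) :
    HasDerivAt (firstOrderProfile ρ α θ δ)
      (firstOrderProfile ρ α θ δ t ᵥ* driftMatrix ρ α θ δ
        - (δ ^ 2 * (Real.exp (-(θ * t)) - 1))
          • fun j => -θ * (α j * (ρ j * α j) - (∑ k, ρ k * α k ^ 2) * ρ j)) t := by
  have hc : HasDerivAt (fun t => δ * (Real.exp (-(θ * t)) - 1))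
      (δ * (Real.exp (-(θ * t)) * -θ)) t := by
    simpa using (((hasDerivAt_id t).const_mul θ).neg.exp.sub_const 1).const_mul δ
  refine ((hc.smul_const _).const_add ρ).congr_deriv ?_
  rw [firstOrderProfile, vecMul_driftMatrix_add_smul hsum hcen]
  ext j
  simp only [Pi.add_apply, Pi.sub_apply, Pi.smul_apply, smul_eq_mul]
  ring

theorem exists_norm_vecMul_exp_driftMatrix_sub_le (hsum : ∑ k, ρ k = 1)
    (hcen : ∑ k, ρ k * α k = 0) (hθ : 0 ≤ θ) (T : ℝ) :
    ∃ C, ∀ δ : ℝ, |δ| ≤ 1 → ∀ s ∈ Set.Icc 0 T,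
      ‖ρ ᵥ* NormedSpace.exp (s • driftMatrix ρ α θ δ) - firstOrderProfile ρ α θ δ s‖
        ≤ C * δ ^ 2 := by
  obtain ⟨L, hL0, hL⟩ := exists_norm_vecMul_le_of_abs_le_one (driftMatrix ρ α θ 0)
    (driftMatrix ρ α θ 1 - driftMatrix ρ α θ 0)
  set γ : ι → ℝ := fun j => -θ * (α j * (ρ j * α j) - (∑ k, ρ k * α k ^ 2) * ρ j)
  refine ⟨‖γ‖ * T * Real.exp (L * T), fun δ hδ s hs => ?_⟩
  set M := driftMatrix ρ α θ δ
  set ψ : ℝ → ι → ℝ := fun t => ρ ᵥ* NormedSpace.exp (t • M) - firstOrderProfile ρ α θ δ t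
  have hψ' : ∀ t, HasDerivAt ψ (ψ t ᵥ* M + (δ ^ 2 * (Real.exp (-(θ * t)) - 1)) • γ) t :=
    fun t => ((hasDerivAt_vecMul_exp_smul ρ M t).sub
      (hasDerivAt_firstOrderProfile hsum hcen δ t)).congr_deriv (by rw [sub_vecMul]; abel)
  have hbound : ∀ t ∈ Set.Ico 0 T,
      ‖ψ t ᵥ* M + (δ ^ 2 * (Real.exp (-(θ * t)) - 1)) • γ‖ ≤ L * ‖ψ t‖ + δ ^ 2 * ‖γ‖ := by
    intro t ht
    refine (norm_add_le _ _).trans (add_le_add ?_ ?_)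
    · rw [show M = _ from driftMatrix_eq_add_smul δ]
      exact hL δ hδ (ψ t)
    · rw [norm_smul, Real.norm_eq_abs, abs_mul, abs_of_nonneg (sq_nonneg δ)]
      gcongr
      exact mul_le_of_le_one_right (sq_nonneg δ)
        (abs_exp_sub_one_le_one_of_nonpos (neg_nonpos.2 (mul_nonneg hθ ht.1)))
  have hψ0 : ‖ψ 0‖ ≤ 0 := by simp [ψ, firstOrderProfile, NormedSpace.exp_zero]
  have hgron := norm_le_gronwallBound_of_norm_deriv_right_le
    (fun t _ => (hψ' t).continuousAt.continuousWithinAt)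
    (fun t _ => (hψ' t).hasDerivWithinAt) hψ0 hbound s hs
  rw [sub_zero] at hgron
  calc ‖ψ s‖ ≤ δ ^ 2 * ‖γ‖ * s * Real.exp (L * s) :=
        hgron.trans (gronwallBound_zero_le hL0 (by positivity))
    _ ≤ δ ^ 2 * ‖γ‖ * T * Real.exp (L * T) := by
        gcongr
        · exact mul_nonneg (by positivity) (hs.1.trans hs.2)
        all_goals exact hs.2
    _ = ‖γ‖ * T * Real.exp (L * T) * δ ^ 2 := by ring

theorem exists_abs_sum_inv_mul_sq_vecMul_exp_sub_le (hρ : ∀ k, 0 < ρ k)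
    (hsum : ∑ k, ρ k = 1) (hcen : ∑ k, ρ k * α k = 0) (hθ : 0 ≤ θ) (T : ℝ) :
    ∃ C, ∀ δ : ℝ, |δ| ≤ 1 → ∀ s ∈ Set.Icc 0 T,
      |∑ k, (ρ k)⁻¹ * (ρ ᵥ* NormedSpace.exp (s • driftMatrix ρ α θ δ)) k ^ 2
        - (1 + δ ^ 2 * (∑ k, ρ k * α k ^ 2) * (1 - Real.exp (-(θ * s))) ^ 2)|
        ≤ C * |δ| ^ 3 := by
  obtain ⟨C, hC⟩ := exists_norm_vecMul_exp_driftMatrix_sub_le hsum hcen hθ T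
  refine ⟨(∑ k, (ρ k)⁻¹) * C ^ 2 + 2 * (∑ k, |α k|) * C, fun δ hδ s hs => ?_⟩
  set u := ρ ᵥ* NormedSpace.exp (s • driftMatrix ρ α θ δ)
  set c := δ * (Real.exp (-(θ * s)) - 1)
  set ψ := u - firstOrderProfile ρ α θ δ s
  have hψ : ‖ψ‖ ≤ C * δ ^ 2 := hC δ hδ s hs
  have hψsum : ∑ k, ψ k = 0 := by
    simp only [ψ, u, firstOrderProfile, Pi.sub_apply, Pi.add_apply, Pi.smul_apply, smul_eq_mul,
      Finset.sum_sub_distrib, Finset.sum_add_distrib, ← Finset.mul_sum, hcen,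
      sum_vecMul_exp_smul (sum_vecMul_driftMatrix hsum δ)]
    ring
  have hu : u = fun k => ρ k + c * (ρ k * α k) + ψ k := by
    ext k
    simp [ψ, firstOrderProfile, c]
  have hc : |c| ≤ |δ| := by
    rw [abs_mul]
    exact mul_le_of_le_one_right (abs_nonneg δ)
      (abs_exp_sub_one_le_one_of_nonpos (neg_nonpos.2 (mul_nonneg hθ hs.1)))
  have hc2 : c ^ 2 = δ ^ 2 * (1 - Real.exp (-(θ * s))) ^ 2 := by simp only [c]; ring
  rw [hu, sum_inv_mul_sq_eq (fun k => (hρ k).ne') hsum hcen hψsum, hc2]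
  convert_to |∑ k, (ρ k)⁻¹ * ψ k ^ 2 + 2 * c * ∑ k, α k * ψ k| ≤ _ using 2
  · ring
  have hρinv : 0 ≤ ∑ k, (ρ k)⁻¹ := Finset.sum_nonneg fun k _ => (inv_pos.2 (hρ k)).le
  calc |∑ k, (ρ k)⁻¹ * ψ k ^ 2 + 2 * c * ∑ k, α k * ψ k|
      ≤ (∑ k, (ρ k)⁻¹) * ‖ψ‖ ^ 2 + 2 * |c| * ((∑ k, |α k|) * ‖ψ‖) :=
        abs_sum_inv_mul_sq_add_le hρ ψ c
    _ ≤ (∑ k, (ρ k)⁻¹) * (C * δ ^ 2) ^ 2 + 2 * |δ| * ((∑ k, |α k|) * (C * δ ^ 2)) := by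
        gcongr
    _ = (∑ k, (ρ k)⁻¹) * C ^ 2 * |δ| ^ 4 + 2 * (∑ k, |α k|) * C * |δ| ^ 3 := by
        rw [← sq_abs δ]
        ring
    _ ≤ ((∑ k, (ρ k)⁻¹) * C ^ 2 + 2 * (∑ k, |α k|) * C) * |δ| ^ 3 := by
        have h43 : |δ| ^ 4 ≤ |δ| ^ 3 := pow_le_pow_of_le_one (abs_nonneg δ) hδ (by norm_num)
        nlinarith [mul_le_mul_of_nonneg_left h43 (mul_nonneg hρinv (sq_nonneg C))]

theorem isBigO_integral_sum_inv_mul_sq_vecMul_exp_sub (hρ : ∀ k, 0 < ρ k)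
    (hsum : ∑ k, ρ k = 1) (hcen : ∑ k, ρ k * α k = 0) (hθ : 0 ≤ θ) {T : ℝ} (hT : 0 ≤ T) :
    (fun δ : ℝ =>
        (∫ s in (0:ℝ)..T, ∑ k, (ρ k)⁻¹ * (ρ ᵥ* NormedSpace.exp (s • driftMatrix ρ α θ δ)) k ^ 2)
          - (T + δ ^ 2 * (∑ k, ρ k * α k ^ 2) * ∫ s in (0:ℝ)..T, (1 - Real.exp (-(θ * s))) ^ 2))
      =O[nhds 0] fun δ : ℝ => δ ^ 3 := by
  obtain ⟨C, hC⟩ := exists_abs_sum_inv_mul_sq_vecMul_exp_sub_le hρ hsum hcen hθ T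
  have hexp : Continuous fun s : ℝ => (1 - Real.exp (-(θ * s))) ^ 2 := by fun_prop
  have hsplit : ∀ δ : ℝ,
      (∫ s in (0:ℝ)..T, (∑ k, (ρ k)⁻¹ * (ρ ᵥ* NormedSpace.exp (s • driftMatrix ρ α θ δ)) k ^ 2
        - (1 + δ ^ 2 * (∑ k, ρ k * α k ^ 2) * (1 - Real.exp (-(θ * s))) ^ 2)))
      = (∫ s in (0:ℝ)..T, ∑ k, (ρ k)⁻¹ * (ρ ᵥ* NormedSpace.exp (s • driftMatrix ρ α θ δ)) k ^ 2)
          - (T + δ ^ 2 * (∑ k, ρ k * α k ^ 2)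
            * ∫ s in (0:ℝ)..T, (1 - Real.exp (-(θ * s))) ^ 2) := by
    intro δ
    have hu : Continuous fun s : ℝ => ρ ᵥ* NormedSpace.exp (s • driftMatrix ρ α θ δ) :=
      continuous_iff_continuousAt.2 fun s => (hasDerivAt_vecMul_exp_smul ρ _ s).continuousAt
    rw [integral_sub (Continuous.intervalIntegrable (by fun_prop) 0 T)
        (Continuous.intervalIntegrable (by fun_prop) 0 T),
      integral_add intervalIntegrable_const ((hexp.intervalIntegrable 0 T).const_mul _),
      integral_const_mul, integral_const, smul_eq_mul, mul_one, sub_zero]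
  refine (isBigO_intervalIntegral_of_norm_le (C := C) ?_).congr_left hsplit
  filter_upwards [Metric.closedBall_mem_nhds (0:ℝ) one_pos] with δ hδ s hs
  rw [Set.uIoc_of_le hT] at hs
  rw [Real.norm_eq_abs, norm_pow, Real.norm_eq_abs]
  exact hC δ (by simpa using hδ) s (Set.Ioc_subset_Icc_self hs)

end MeanField

theorem stmt_18_general (K : ℕ) (ρ α : Fin K → ℝ)
    (hρ : ∀ k, 0 < ρ k) (hsum : ∑ k, ρ k = 1) (hcen : ∑ k, ρ k * α k = 0)
    (θ : ℝ) (hθ : 0 < θ) (T : ℝ) (hT : 0 < T)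
    (M : ℝ → Matrix (Fin K) (Fin K) ℝ)
    (hM : ∀ δ : ℝ, M δ = Matrix.of fun i j =>
      -θ * (1 + δ * α i) * ((if i = j then (1:ℝ) else 0) - ρ j))
    (R : Matrix (Fin K) (Fin K) ℝ) (hR : R = Matrix.diagonal ρ) :
    ((fun δ : ℝ =>
        (∫ s in (0:ℝ)..T,
          ρ ⬝ᵥ (NormedSpace.exp (s • M δ) * R⁻¹
              * (NormedSpace.exp (s • M δ))ᵀ).mulVec ρ)
          - (T + δ ^ 2 * (∑ k, ρ k * α k ^ 2)
              * ∫ s in (0:ℝ)..T, (1 - Real.exp (-(θ * s))) ^ 2))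
      =O[nhds 0] (fun δ : ℝ => δ ^ 3)) ∧
    ∀ σ : ℝ, 0 < σ → ∀ N : ℕ, 1 ≤ N →
      ((fun δ : ℝ =>
          σ ^ 2 / N * (∫ s in (0:ℝ)..T,
            ρ ⬝ᵥ (NormedSpace.exp (s • M δ) * R⁻¹
                * (NormedSpace.exp (s • M δ))ᵀ).mulVec ρ)
            - σ ^ 2 * T / N * (1 + δ ^ 2 * (∑ k, ρ k * α k ^ 2)
                * ((1 / T) * ∫ s in (0:ℝ)..T, (1 - Real.exp (-(θ * s))) ^ 2)))
        =O[nhds 0] (fun δ : ℝ => δ ^ 3)) := by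
  obtain rfl : M = MeanField.driftMatrix ρ α θ := funext hM
  have hRinv : R⁻¹ = diagonal ρ⁻¹ := hR ▸ inv_eq_right_inv (by
    rw [diagonal_mul_diagonal, ← diagonal_one]
    exact congrArg diagonal (funext fun k => mul_inv_cancel₀ (hρ k).ne'))
  simp_rw [hRinv, MeanField.dotProduct_mulVec_mul_diagonal_mul_transpose, Pi.inv_apply]
  have hmain := MeanField.isBigO_integral_sum_inv_mul_sq_vecMul_exp_sub hρ hsum hcen hθ.le hT.le
  refine ⟨hmain, fun σ _ N _ => (hmain.const_mul_left (σ ^ 2 / N)).congr_left fun δ => ?_⟩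
  field_simp

/-- Small-diversity expansion of the variance of the empirical mean: with group
fractions `ρ_k > 0` summing to 1, centered perturbations `∑ ρ_kα_k = 0`, `θ̄ > 0`,
`T > 0`, drift matrices `(M_δ)_{ij} = −θ̄(1 + δα_i)(δ_{ij} − ρ_j)`, `R = diag(ρ)`:
`∫₀ᵀ ϱᵀ e^{sM_δ} R⁻¹ (e^{sM_δ})ᵀ ϱ ds = T + δ²(∑ ρ_kα_k²)∫₀ᵀ(1 − e^{−θ̄s})² ds + O(δ³)`
as `δ → 0`; equivalently `σ_T² = (σ²/N)∫₀ᵀ(…)ds` satisfies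
`σ_T² = (σ²T/N)[1 + δ²(∑ ρ_kα_k²)(1/T)∫₀ᵀ(1 − e^{−θ̄s})² ds + O(δ³)]`. -/
theorem stmt_18 (K : ℕ) (hK : 1 ≤ K) (ρ α : Fin K → ℝ)
    (hρ : ∀ k, 0 < ρ k) (hsum : ∑ k, ρ k = 1) (hcen : ∑ k, ρ k * α k = 0)
    (θ : ℝ) (hθ : 0 < θ) (T : ℝ) (hT : 0 < T)
    (M : ℝ → Matrix (Fin K) (Fin K) ℝ)
    (hM : ∀ δ : ℝ, M δ = Matrix.of fun i j =>
      -θ * (1 + δ * α i) * ((if i = j then (1:ℝ) else 0) - ρ j))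
    (R : Matrix (Fin K) (Fin K) ℝ) (hR : R = Matrix.diagonal ρ) :
    ((fun δ : ℝ =>
        (∫ s in (0:ℝ)..T,
          ρ ⬝ᵥ (NormedSpace.exp (s • M δ) * R⁻¹
              * (NormedSpace.exp (s • M δ))ᵀ).mulVec ρ)
          - (T + δ ^ 2 * (∑ k, ρ k * α k ^ 2)
              * ∫ s in (0:ℝ)..T, (1 - Real.exp (-(θ * s))) ^ 2))
      =O[nhds 0] (fun δ : ℝ => δ ^ 3)) ∧
    ∀ σ : ℝ, 0 < σ → ∀ N : ℕ, 1 ≤ N →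
      ((fun δ : ℝ =>
          σ ^ 2 / N * (∫ s in (0:ℝ)..T,
            ρ ⬝ᵥ (NormedSpace.exp (s • M δ) * R⁻¹
                * (NormedSpace.exp (s • M δ))ᵀ).mulVec ρ)
            - σ ^ 2 * T / N * (1 + δ ^ 2 * (∑ k, ρ k * α k ^ 2)
                * ((1 / T) * ∫ s in (0:ℝ)..T, (1 - Real.exp (-(θ * s))) ^ 2)))
        =O[nhds 0] (fun δ : ℝ => δ ^ 3)) :=
  stmt_18_general K ρ α hρ hsum hcen θ hθ T hT M hM R hR
end

section
/- Let K ≥ 1, ρ_1,…,ρ_K > 0 with ∑ρ_k = 1, α_1,…,α_K ∈ ℝ with ∑ρ_kα_k = 0, θ̄ > 0 and σ > 0. For δ in a neighborhood of 0, set θ_k(δ) = θ̄(1 + δα_k) and define ξ_b(δ)² = ( ∑_{k=1}^K (ρ_k/θ_k(δ))·(1 − 3σ²/(2θ_k(δ))) ) / ( ∑_{k=1}^K ρ_k/θ_k(δ) ). Then, as δ → 0, ξ_b(δ)² = (1 − 3σ²/(2θ̄)) − δ²·(3σ²/θ̄)·(∑_{k=1}^K ρ_k α_k²) + O(δ³).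 In particular, for all sufficiently small δ ≠ 0 with ∑ρ_kα_k² > 0, ξ_b(δ)² < ξ_b(0)² = 1 − 3σ²/(2θ̄): diversity reduces the gap between the two equilibrium states. -/
/-!
With the inverse moments `Pₙ(δ) = ∑ ρₖ (1 + δαₖ)⁻ⁿ` one has `ξ_b(δ)² = 1 - c P₂/P₁`,
`c = 3σ²/(2θ̄)`. Centering makes `P₂ - P₁ = δ² V(δ)` exactly, where `V(0) = 2∑ ρₖαₖ²`, and
`P₁(0) = ∑ ρₖ = 1`. Hence `P₂/P₁ - 1 - 2δ²∑ ρₖαₖ² = δ² (V/P₁ - V(0)/P₁(0))` with a bracket that is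
differentiable and vanishes at `0`, so it is `O(δ)` and the whole remainder is `O(δ³)`.
The strict inequality follows because the negative `δ²` term dominates an `O(δ³)` error.
-/

open Filter Asymptotics Topology

theorem isBigO_sq_mul_of_differentiableAt {g : ℝ → ℝ} (hg : DifferentiableAt ℝ g 0)
    (hg0 : g 0 = 0) : (fun δ : ℝ => δ ^ 2 * g δ) =O[𝓝 0] fun δ => δ ^ 3 := by
  have hlin : g =O[𝓝 0] fun δ => δ := by simpa [hg0] using hg.isBigO_sub
  exact ((isBigO_refl (fun δ : ℝ => δ ^ 2) (𝓝 0)).mul hlin).congr_right fun δ => by ring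

theorem eventually_lt_of_isBigO_sub_sq {f : ℝ → ℝ} {a b : ℝ} (hb : 0 < b)
    (hf : (fun δ => f δ - (a - δ ^ 2 * b)) =O[𝓝 0] fun δ => δ ^ 3) :
    ∀ᶠ δ in 𝓝[≠] 0, f δ < a := by
  have hsmall := (hf.trans_isLittleO (isLittleO_pow_pow (𝕜 := ℝ) (by norm_num : 2 < 3))).bound
    (half_pos hb)
  filter_upwards [eventually_nhdsWithin_of_eventually_nhds hsmall, self_mem_nhdsWithin]
    with δ hδ (hδ0 : δ ≠ 0)
  have hsq : 0 < δ ^ 2 := by positivity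
  rw [Real.norm_eq_abs, Real.norm_eq_abs, abs_of_pos hsq] at hδ
  nlinarith [le_abs_self (f δ - (a - δ ^ 2 * b))]

theorem inv_one_add_sq_sub_inv_one_add {𝕜 : Type*} [Field 𝕜] {x : 𝕜} (hx : 1 + x ≠ 0) :
    (1 + x)⁻¹ ^ 2 - (1 + x)⁻¹ = x ^ 2 * ((1 + x)⁻¹ + (1 + x)⁻¹ ^ 2) - x := by
  field_simp
  ring

section InverseMoments

variable {ι : Type*} [Fintype ι] (ρ α : ι → ℝ)

noncomputable def invMoment (n : ℕ) (δ : ℝ) : ℝ := ∑ k, ρ k * (1 + δ * α k)⁻¹ ^ n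

theorem invMoment_zero (n : ℕ) : invMoment ρ α n 0 = ∑ k, ρ k := by
  simp [invMoment]

theorem differentiableAt_invMoment (n : ℕ) : DifferentiableAt ℝ (invMoment ρ α n) 0 := by
  unfold invMoment
  fun_prop (disch := simp)

theorem invMoment_two_sub_invMoment_one {δ : ℝ} (hcen : ∑ k, ρ k * α k = 0)
    (hδ : ∀ k, 1 + δ * α k ≠ 0) :
    invMoment ρ α 2 δ - invMoment ρ α 1 δ
      = δ ^ 2 * ∑ k, ρ k * α k ^ 2 * ((1 + δ * α k)⁻¹ + (1 + δ * α k)⁻¹ ^ 2) := by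
  have hterm : ∀ k, ρ k * (1 + δ * α k)⁻¹ ^ 2 - ρ k * (1 + δ * α k)⁻¹ ^ 1
      = δ ^ 2 * (ρ k * α k ^ 2 * ((1 + δ * α k)⁻¹ + (1 + δ * α k)⁻¹ ^ 2)) - δ * (ρ k * α k) :=
    fun k => by linear_combination ρ k * inv_one_add_sq_sub_inv_one_add (hδ k)
  rw [invMoment, invMoment, ← Finset.sum_sub_distrib, Finset.sum_congr rfl fun k _ => hterm k,
    Finset.sum_sub_distrib, ← Finset.mul_sum, ← Finset.mul_sum, hcen, mul_zero, sub_zero]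

theorem eventually_invMoment_one_ne_zero (hsum : ∑ k, ρ k = 1) :
    ∀ᶠ δ in 𝓝 0, invMoment ρ α 1 δ ≠ 0 :=
  (differentiableAt_invMoment ρ α 1).continuousAt.eventually_ne <| by
    rw [invMoment_zero, hsum]
    exact one_ne_zero

theorem isBigO_invMoment_two_div_one_sub (hsum : ∑ k, ρ k = 1) (hcen : ∑ k, ρ k * α k = 0) :
    (fun δ => invMoment ρ α 2 δ / invMoment ρ α 1 δ - (1 + δ ^ 2 * (2 * ∑ k, ρ k * α k ^ 2)))
      =O[𝓝 0] fun δ => δ ^ 3 := by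
  set S := ∑ k, ρ k * α k ^ 2
  set V : ℝ → ℝ := fun δ => ∑ k, ρ k * α k ^ 2 * ((1 + δ * α k)⁻¹ + (1 + δ * α k)⁻¹ ^ 2)
  have hP1 : invMoment ρ α 1 0 = 1 := by rw [invMoment_zero, hsum]
  have hg : DifferentiableAt ℝ (fun δ => V δ / invMoment ρ α 1 δ - 2 * S) 0 := by
    refine (DifferentiableAt.div ?_ (differentiableAt_invMoment ρ α 1) (by simp [hP1])).sub_const _
    fun_prop (disch := simp)
  have hV0 : V 0 = 2 * S := by
    simp only [V, S, Finset.mul_sum, zero_mul, add_zero, inv_one, one_pow]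
    exact Finset.sum_congr rfl fun k _ => by ring
  have hg0 : V 0 / invMoment ρ α 1 0 - 2 * S = 0 := by rw [hV0, hP1, div_one, sub_self]
  have hpoles : ∀ᶠ δ in 𝓝 0, ∀ k, 1 + δ * α k ≠ 0 :=
    eventually_all.2 fun k =>
      (by fun_prop : Continuous fun δ : ℝ => 1 + δ * α k).continuousAt.eventually_ne (by simp)
  refine (isBigO_sq_mul_of_differentiableAt hg hg0).congr' ?_ EventuallyEq.rfl
  filter_upwards [hpoles, eventually_invMoment_one_ne_zero ρ α hsum] with δ hδ hδ1
  have hdiff : invMoment ρ α 2 δ - invMoment ρ α 1 δ = δ ^ 2 * V δ :=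
    invMoment_two_sub_invMoment_one ρ α hcen hδ
  field_simp
  linear_combination -hdiff

/-- `ξ_b(δ)²` from (3.6) with `θₖ = θ (1 + δ αₖ)`. -/
noncomputable def equilibriumSq (θ σ δ : ℝ) : ℝ :=
  (∑ k, (ρ k / (θ * (1 + δ * α k))) * (1 - 3 * σ ^ 2 / (2 * (θ * (1 + δ * α k)))))
    / (∑ k, ρ k / (θ * (1 + δ * α k)))

theorem equilibriumSq_eq {θ : ℝ} (hθ : θ ≠ 0) (σ δ : ℝ) :
    equilibriumSq ρ α θ σ δ
      = (invMoment ρ α 1 δ - 3 * σ ^ 2 / (2 * θ) * invMoment ρ α 2 δ) / invMoment ρ α 1 δ := by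
  have hnum : ∑ k, (ρ k / (θ * (1 + δ * α k))) * (1 - 3 * σ ^ 2 / (2 * (θ * (1 + δ * α k))))
      = θ⁻¹ * (invMoment ρ α 1 δ - 3 * σ ^ 2 / (2 * θ) * invMoment ρ α 2 δ) := by
    simp only [invMoment, Finset.mul_sum, ← Finset.sum_sub_distrib]
    refine Finset.sum_congr rfl fun k _ => ?_
    simp only [div_eq_mul_inv, mul_inv]
    ring
  have hden : ∑ k, ρ k / (θ * (1 + δ * α k)) = θ⁻¹ * invMoment ρ α 1 δ := by
    simp only [invMoment, Finset.mul_sum, div_eq_mul_inv, mul_inv, pow_one]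
    exact Finset.sum_congr rfl fun k _ => by ring
  rw [equilibriumSq, hnum, hden, mul_div_mul_left _ _ (inv_ne_zero hθ)]

end InverseMoments

theorem stmt_19_general (K : ℕ) (ρ α : Fin K → ℝ)
    (hsum : ∑ k, ρ k = 1) (hcen : ∑ k, ρ k * α k = 0)
    (θ σ : ℝ) (hθ : 0 < θ) (hσ : 0 < σ)
    (ξbsq : ℝ → ℝ)
    (hξ : ∀ δ : ℝ, ξbsq δ =
      (∑ k, (ρ k / (θ * (1 + δ * α k))) * (1 - 3 * σ ^ 2 / (2 * (θ * (1 + δ * α k)))))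
        / (∑ k, ρ k / (θ * (1 + δ * α k)))) :
    ((fun δ : ℝ => ξbsq δ
        - ((1 - 3 * σ ^ 2 / (2 * θ))
            - δ ^ 2 * (3 * σ ^ 2 / θ) * ∑ k, ρ k * α k ^ 2))
      =O[nhds 0] (fun δ : ℝ => δ ^ 3)) ∧
    ((0 < ∑ k, ρ k * α k ^ 2) →
      ∀ᶠ δ : ℝ in nhdsWithin 0 {0}ᶜ, ξbsq δ < 1 - 3 * σ ^ 2 / (2 * θ)) := by
  have hexpansion : (fun δ : ℝ => ξbsq δ
      - ((1 - 3 * σ ^ 2 / (2 * θ)) - δ ^ 2 * (3 * σ ^ 2 / θ) * ∑ k, ρ k * α k ^ 2))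
        =O[𝓝 0] fun δ => δ ^ 3 := by
    refine ((isBigO_invMoment_two_div_one_sub ρ α hsum hcen).const_mul_left
      (-(3 * σ ^ 2 / (2 * θ)))).congr' ?_ EventuallyEq.rfl
    filter_upwards [eventually_invMoment_one_ne_zero ρ α hsum] with δ hδ
    rw [(hξ δ).trans (equilibriumSq_eq ρ α hθ.ne' σ δ)]
    field_simp
    ring
  refine ⟨hexpansion, fun hS => eventually_lt_of_isBigO_sub_sq
    (b := 3 * σ ^ 2 / θ * ∑ k, ρ k * α k ^ 2) (mul_pos (by positivity) hS) ?_⟩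
  simpa only [mul_assoc] using hexpansion

/-- Small-diversity expansion of the squared equilibrium value: with group
fractions `ρ_k > 0` summing to 1, centered perturbations `∑ ρ_kα_k = 0`,
`θ̄, σ > 0`, `θ_k(δ) = θ̄(1 + δα_k)` and
`ξ_b(δ)² = (∑ (ρ_k/θ_k(δ))(1 − 3σ²/(2θ_k(δ)))) / (∑ ρ_k/θ_k(δ))`, one has
`ξ_b(δ)² = (1 − 3σ²/(2θ̄)) − δ²(3σ²/θ̄)(∑ ρ_kα_k²) + O(δ³)` as `δ → 0`;
in particular, if `∑ ρ_kα_k² > 0` then for all sufficiently small `δ ≠ 0`,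
`ξ_b(δ)² < 1 − 3σ²/(2θ̄)`: diversity reduces the gap between the equilibria. -/
theorem stmt_19 (K : ℕ) (hK : 1 ≤ K) (ρ α : Fin K → ℝ)
    (hρ : ∀ k, 0 < ρ k) (hsum : ∑ k, ρ k = 1) (hcen : ∑ k, ρ k * α k = 0)
    (θ σ : ℝ) (hθ : 0 < θ) (hσ : 0 < σ)
    (ξbsq : ℝ → ℝ)
    (hξ : ∀ δ : ℝ, ξbsq δ =
      (∑ k, (ρ k / (θ * (1 + δ * α k))) * (1 - 3 * σ ^ 2 / (2 * (θ * (1 + δ * α k)))))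
        / (∑ k, ρ k / (θ * (1 + δ * α k)))) :
    ((fun δ : ℝ => ξbsq δ
        - ((1 - 3 * σ ^ 2 / (2 * θ))
            - δ ^ 2 * (3 * σ ^ 2 / θ) * ∑ k, ρ k * α k ^ 2))
      =O[nhds 0] (fun δ : ℝ => δ ^ 3)) ∧
    ((0 < ∑ k, ρ k * α k ^ 2) →
      ∀ᶠ δ : ℝ in nhdsWithin 0 {0}ᶜ, ξbsq δ < 1 - 3 * σ ^ 2 / (2 * θ)) :=
  stmt_19_general K ρ α hsum hcen θ σ hθ hσ ξbsq hξ
end
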